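/- arXiv:math/0303178 — 2 statements merged into one kernel-verified Lean document; each statement's English description precedes it below -/
import Mathlib

section
/- For complex numbers q, a, z with |q| < 1 and |z| < 1, the q-binomial theorem holds: ∑_{n=0}^∞ ((a;q)_n / (q;q)_n) z^n = (az;q)_∞ / (z;q)_∞. -/
open scoped Real

/-!
The coefficients `c n = (a;q)_n / (q;q)_n` satisfy `c (n+1) (1 - q^(n+1)) = c n (1 - a q^n)` and
converge, so they are bounded and `F w = ∑ c n w^n` converges on the unit disc. Comparing
coefficients gives the functional equation `(1 - w) F w = (1 - a w) F (q w)`; iterating it,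
`F z (z;q)_N = F (q^N z) (az;q)_N`, and letting `N → ∞` gives `F z (z;q)_∞ = F 0 (az;q)_∞ = (az;q)_∞`.
-/

/-- The infinite q-Pochhammer symbol `(a;q)_∞ = ∏_{j=0}^∞ (1 - a q^j)`. -/
noncomputable def qPochInf (a q : ℂ) : ℂ := ∏' n : ℕ, (1 - a * q ^ n)

/-- The finite q-Pochhammer symbol `(a;q)_n = ∏_{j=0}^{n-1} (1 - a q^j)`. -/
noncomputable def qPoch (a q : ℂ) (n : ℕ) : ℂ := ∏ j ∈ Finset.range n, (1 - a * q ^ j)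

open Filter Topology

lemma qPoch_zero (w q : ℂ) : qPoch w q 0 = 1 := Finset.prod_range_zero _

lemma qPoch_succ (w q : ℂ) (n : ℕ) : qPoch w q (n + 1) = qPoch w q n * (1 - w * q ^ n) :=
  Finset.prod_range_succ _ _

lemma norm_pow_mul_le {q w : ℂ} (hq : ‖q‖ ≤ 1) (n : ℕ) : ‖q ^ n * w‖ ≤ ‖w‖ := by
  rw [norm_mul, norm_pow]
  exact mul_le_of_le_one_left (norm_nonneg w) (pow_le_one₀ (norm_nonneg q) hq)

lemma one_sub_mul_pow_ne_zero {w q : ℂ} (hw : ‖w‖ < 1) (hq : ‖q‖ ≤ 1) (n : ℕ) :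
    1 - w * q ^ n ≠ 0 := by
  rw [sub_ne_zero, mul_comm]
  intro h
  exact (norm_pow_mul_le hq n).not_gt (by rwa [← h, norm_one])

lemma qPoch_ne_zero {w q : ℂ} (hw : ‖w‖ < 1) (hq : ‖q‖ ≤ 1) (n : ℕ) : qPoch w q n ≠ 0 :=
  Finset.prod_ne_zero_iff.2 fun j _ => one_sub_mul_pow_ne_zero hw hq j

lemma summable_norm_mul_pow (w : ℂ) {q : ℂ} (hq : ‖q‖ < 1) :
    Summable fun n : ℕ => ‖w * q ^ n‖ := by
  simpa only [norm_mul, norm_pow] using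
    (summable_geometric_of_lt_one (norm_nonneg q) hq).mul_left ‖w‖

lemma tendsto_qPoch (w : ℂ) {q : ℂ} (hq : ‖q‖ < 1) :
    Tendsto (qPoch w q) atTop (𝓝 (qPochInf w q)) := by
  have := multipliable_one_add_of_summable (f := fun n => -(w * q ^ n))
    (by simpa only [norm_neg] using summable_norm_mul_pow w hq)
  simp only [← sub_eq_add_neg] at this
  exact this.hasProd.tendsto_prod_nat

lemma qPochInf_ne_zero {w q : ℂ} (hw : ‖w‖ < 1) (hq : ‖q‖ < 1) : qPochInf w q ≠ 0 := by
  have := tprod_one_add_ne_zero_of_summable (f := fun n => -(w * q ^ n))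
    (fun n => by simpa only [← sub_eq_add_neg] using one_sub_mul_pow_ne_zero hw hq.le n)
    (by simpa only [norm_neg] using summable_norm_mul_pow w hq)
  unfold qPochInf
  simpa only [← sub_eq_add_neg] using this

lemma qPoch_div_qPoch_succ_mul (a : ℂ) {q : ℂ} (hq : ‖q‖ < 1) (n : ℕ) :
    qPoch a q (n + 1) / qPoch q q (n + 1) * (1 - q ^ (n + 1))
      = qPoch a q n / qPoch q q n * (1 - a * q ^ n) := by
  have hQ := qPoch_ne_zero hq hq.le n
  have hq' : 1 - q ^ (n + 1) ≠ 0 := pow_succ' q n ▸ one_sub_mul_pow_ne_zero hq hq.le n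
  rw [qPoch_succ, qPoch_succ, ← pow_succ']
  field_simp

lemma exists_norm_qPoch_div_qPoch_le (a : ℂ) {q : ℂ} (hq : ‖q‖ < 1) :
    ∃ C, ∀ n, ‖qPoch a q n / qPoch q q n‖ ≤ C := by
  have hlim := (tendsto_qPoch a hq).div (tendsto_qPoch q hq) (qPochInf_ne_zero hq hq)
  obtain ⟨C, hC⟩ := isBounded_iff_forall_norm_le.1 (Metric.isBounded_range_of_tendsto _ hlim)
  exact ⟨C, fun n => hC _ ⟨n, rfl⟩⟩

section BoundedCoefficients

variable {c : ℕ → ℂ} {C : ℝ}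

lemma summable_mul_pow_of_norm_le (hc : ∀ n, ‖c n‖ ≤ C) {w : ℂ} (hw : ‖w‖ < 1) :
    Summable fun n => c n * w ^ n :=
  .of_norm_bounded ((summable_geometric_of_lt_one (norm_nonneg w) hw).mul_left C) fun n => by
    rw [norm_mul, norm_pow]
    gcongr
    exact hc n

lemma one_sub_mul_tsum_mul_pow {q a w : ℂ} (hc : ∀ n, ‖c n‖ ≤ C) (hq : ‖q‖ ≤ 1) (hw : ‖w‖ < 1)
    (hrec : ∀ n, c (n + 1) * (1 - q ^ (n + 1)) = c n * (1 - a * q ^ n)) :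
    (1 - w) * ∑' n, c n * w ^ n = (1 - a * w) * ∑' n, c n * (q * w) ^ n := by
  have hqw : ‖q * w‖ < 1 := by simpa using (norm_pow_mul_le hq 1).trans_lt hw
  set S := ∑' n, c n * w ^ n
  set T := ∑' n, c n * (q * w) ^ n
  have hS := (summable_mul_pow_of_norm_le hc hw).hasSum
  have hT := (summable_mul_pow_of_norm_le hc hqw).hasSum
  have hdiff : HasSum (fun n => c n * (1 - q ^ n) * w ^ n) (S - T) := by
    have e : (fun n => c n * (1 - q ^ n) * w ^ n) = fun n => c n * w ^ n - c n * (q * w) ^ n := by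
      funext n
      rw [mul_pow]
      ring
    rw [e]
    exact hS.sub hT
  -- the `n = 0` term vanishes, and the recurrence turns the shifted series into `w (S - a T)`
  have hshift : HasSum (fun n => w * (c n * w ^ n - a * (c n * (q * w) ^ n))) (S - T) := by
    have e : (fun n => c (n + 1) * (1 - q ^ (n + 1)) * w ^ (n + 1))
        = fun n => w * (c n * w ^ n - a * (c n * (q * w) ^ n)) := by
      funext n
      rw [hrec, mul_pow]
      ring
    have h := (hasSum_nat_add_iff' 1).2 hdiff
    rwa [e, Finset.sum_range_one, pow_zero, sub_self, mul_zero, zero_mul, sub_zero] at h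
  linear_combination hshift.unique ((hS.sub (hT.mul_left a)).mul_left w)

lemma tendsto_tsum_mul_pow_pow_mul {q z : ℂ} (hc : ∀ n, ‖c n‖ ≤ C) (hq : ‖q‖ < 1)
    (hz : ‖z‖ < 1) : Tendsto (fun N : ℕ => ∑' n, c n * (q ^ N * z) ^ n) atTop (𝓝 (c 0)) := by
  have hzero : Tendsto (fun N : ℕ => q ^ N * z) atTop (𝓝 0) := by
    simpa using (tendsto_pow_atTop_nhds_zero_of_norm_lt_one hq).mul_const z
  have hlim := tendsto_tsum_of_dominated_convergence
    ((summable_geometric_of_lt_one (norm_nonneg z) hz).mul_left C)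
    (fun n => ((hzero.pow n).const_mul (c n)))
    (Eventually.of_forall fun N n => by
      rw [norm_mul, norm_pow]
      exact mul_le_mul (hc n) (pow_le_pow_left₀ (norm_nonneg _) (norm_pow_mul_le hq.le N) n)
        (by positivity) ((norm_nonneg _).trans (hc 0)))
  rwa [tsum_eq_single 0 fun n hn => by simp [hn], pow_zero, mul_one] at hlim

end BoundedCoefficients

lemma mul_qPoch_eq_of_functional_eq {F : ℂ → ℂ} {q a z : ℂ} (hq : ‖q‖ ≤ 1) (hz : ‖z‖ < 1)
    (hF : ∀ w, ‖w‖ < 1 → (1 - w) * F w = (1 - a * w) * F (q * w)) (N : ℕ) :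
    F z * qPoch z q N = F (q ^ N * z) * qPoch (a * z) q N := by
  induction N with
  | zero => simp [qPoch_zero]
  | succ N ih =>
    have hN := hF (q ^ N * z) ((norm_pow_mul_le hq N).trans_lt hz)
    rw [qPoch_succ, qPoch_succ, pow_succ', mul_assoc]
    linear_combination (1 - z * q ^ N) * ih + qPoch (a * z) q N * hN

/-- The q-binomial theorem: `∑_{n≥0} ((a;q)_n/(q;q)_n) z^n = (az;q)_∞/(z;q)_∞`
for `|q| < 1` and `|z| < 1`. -/
theorem q_binomial_theorem (q a z : ℂ) (hq : ‖q‖ < 1) (hz : ‖z‖ < 1) :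
    ∑' n : ℕ, (qPoch a q n / qPoch q q n) * z ^ n
      = qPochInf (a * z) q / qPochInf z q := by
  set c : ℕ → ℂ := fun n => qPoch a q n / qPoch q q n
  obtain ⟨C, hC⟩ := exists_norm_qPoch_div_qPoch_le a hq
  have hF (w : ℂ) (hw : ‖w‖ < 1) :
      (1 - w) * ∑' n, c n * w ^ n = (1 - a * w) * ∑' n, c n * (q * w) ^ n :=
    one_sub_mul_tsum_mul_pow hC hq.le hw (qPoch_div_qPoch_succ_mul a hq)
  have hlim : Tendsto (fun N : ℕ => (∑' n, c n * (q ^ N * z) ^ n) * qPoch (a * z) q N) atTop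
      (𝓝 (1 * qPochInf (a * z) q)) := by
    simpa [c, qPoch_zero] using
      (tendsto_tsum_mul_pow_pow_mul hC hq hz).mul (tendsto_qPoch (a * z) hq)
  have hprod : (∑' n, c n * z ^ n) * qPochInf z q = 1 * qPochInf (a * z) q := by
    refine tendsto_nhds_unique ((tendsto_qPoch z hq).const_mul _) ?_
    simpa only [mul_qPoch_eq_of_functional_eq hq.le hz hF] using hlim
  rw [eq_div_iff (qPochInf_ne_zero hz hq), hprod, one_mul]
end

section
/- For τ in the upper half plane and q = exp(2πiτ), the Jacobi theta function ϑ_τ(z) = ∑_{m=-∞}^∞ q^{m²/2} exp(2πimz) satisfies the triple product identity ϑ_τ(z) = (q; q)_∞ · (-q^{1/2} e^{2πiz}; q)_∞ · (-q^{1/2} e^{-2πiz}; q)_∞. -/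
open scoped Real

/-!
Write `Q = e^{πiτ}`, `x = e^{2πiz}` and `q = Q²`. Both Pascal recurrences for the Gaussian
binomials `[n, k]_q` give, by induction on `N`, the finite identity
`∏_{n<N} (1 + x Q^{2n+1}) (1 + x⁻¹ Q^{2n+1}) = ∑_{|m| ≤ N} [2N, N+m]_q Q^{m²} x^m`.
Multiply it by `(q;q)_{2N}` and let `N → ∞`: the products tend to the triple product, while
`(q;q)_{2N} [2N, N+m]_q = (q;q)_{2N}² / ((q;q)_{N+m} (q;q)_{N-m})` tends to `1` for each `m`
and is bounded uniformly in `N` and `m`, because `(q;q)_n` converges to `(q;q)_∞ ≠ 0`. Tannery's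
theorem then turns the right-hand sides into the theta series.
-/

open Filter Finset Topology

section QBinomial

variable {K : Type*} [Field K] (q : K)

def qFactorial (n : ℕ) : K := ∏ j ∈ range n, (1 - q ^ (j + 1))

def qBinomial : ℕ → ℤ → K
  | 0, k => if k = 0 then 1 else 0
  | n + 1, k => qBinomial n (k - 1) + q ^ k * qBinomial n k

variable {q}

theorem qFactorial_succ (n : ℕ) : qFactorial q (n + 1) = qFactorial q n * (1 - q ^ (n + 1)) :=
  prod_range_succ _ _

theorem qBinomial_succ (n : ℕ) (k : ℤ) :
    qBinomial q (n + 1) k = qBinomial q n (k - 1) + q ^ k * qBinomial q n k := rfl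

theorem qBinomial_eq_zero {n : ℕ} {k : ℤ} (hk : k < 0 ∨ n < k) : qBinomial q n k = 0 := by
  induction n generalizing k with
  | zero => simp [qBinomial]; omega
  | succ n ih => rw [qBinomial_succ, ih (by omega), ih (by omega), mul_zero, add_zero]

theorem qBinomial_zero_right (n : ℕ) : qBinomial q n 0 = 1 := by
  induction n with
  | zero => simp [qBinomial]
  | succ n ih => rw [qBinomial_succ, qBinomial_eq_zero (by omega), ih]; simp

theorem qBinomial_self (n : ℕ) : qBinomial q n n = 1 := by
  induction n with
  | zero => simp [qBinomial]
  | succ n ih =>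
    rw [qBinomial_succ, qBinomial_eq_zero (k := ((n + 1 : ℕ) : ℤ)) (by omega)]
    simpa using ih

theorem qBinomial_succ' (hq : q ≠ 0) (n : ℕ) (k : ℤ) :
    qBinomial q (n + 1) k = q ^ ((n : ℤ) + 1 - k) * qBinomial q n (k - 1) + qBinomial q n k := by
  induction n generalizing k with
  | zero =>
    rcases eq_or_ne k 0 with rfl | h0
    · simp [qBinomial]
    rcases eq_or_ne k 1 with rfl | h1
    · simp [qBinomial]
    simp [qBinomial, h0, h1, sub_eq_zero]
  | succ n ih =>
    have hpow (a b : ℤ) (h : a + b = n + 1) : q ^ a * q ^ b = q ^ ((n : ℤ) + 1) := by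
      rw [← zpow_add₀ hq, h]
    conv_lhs => rw [qBinomial_succ, ih, ih, show (n : ℤ) + 1 - (k - 1) = n + 1 + 1 - k by ring]
    conv_rhs => rw [qBinomial_succ n (k - 1), qBinomial_succ n k]
    push_cast
    linear_combination qBinomial q n (k - 1) *
      (hpow k ((n : ℤ) + 1 - k) (by ring) - hpow ((n : ℤ) + 1 + 1 - k) (k - 1) (by ring))

theorem qFactorial_mul_qFactorial_mul_qBinomial {k n : ℕ} (h : k ≤ n) :
    qFactorial q k * qFactorial q (n - k) * qBinomial q n k = qFactorial q n := by
  induction n generalizing k with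
  | zero =>
    obtain rfl : k = 0 := by omega
    simp [qFactorial, qBinomial]
  | succ n ih =>
    rcases k with _ | j
    · simp [qFactorial, qBinomial_zero_right]
    rcases (show j = n ∨ j < n by omega) with rfl | hj
    · rw [Nat.sub_self, qBinomial_self]; simp [qFactorial]
    obtain ⟨d, rfl⟩ : ∃ d, n = j + 1 + d := ⟨n - (j + 1), by omega⟩
    have h₁ := ih (k := j) (by omega)
    have h₂ := ih (k := j + 1) (by omega)
    rw [show j + 1 + d - j = d + 1 by omega, qFactorial_succ d] at h₁
    rw [show j + 1 + d - (j + 1) = d by omega, qFactorial_succ] at h₂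
    rw [show j + 1 + d + 1 - (j + 1) = d + 1 by omega, qFactorial_succ, qFactorial_succ d,
      qFactorial_succ, qBinomial_succ, show ((j + 1 : ℕ) : ℤ) - 1 = j by push_cast; ring,
      zpow_natCast]
    linear_combination (1 - q ^ (j + 1)) * h₁ + q ^ (j + 1) * (1 - q ^ (d + 1)) * h₂

theorem qBinomial_add_two_add_one (hq : q ≠ 0) (n : ℕ) (k : ℤ) :
    qBinomial q (n + 2) (k + 1) = (1 + q ^ (n + 1)) * qBinomial q n k
      + q ^ ((n : ℤ) + 1 - k) * qBinomial q n (k - 1) + q ^ (k + 1) * qBinomial q n (k + 1) := by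
  have hpow : q ^ (k + 1) * q ^ ((n : ℤ) + 1 - (k + 1)) = q ^ (n + 1) := by
    rw [← zpow_add₀ hq, ← zpow_natCast]; push_cast; ring_nf
  rw [qBinomial_succ, qBinomial_succ' hq, qBinomial_succ' hq, add_sub_cancel_right]
  linear_combination qBinomial q n k * hpow

end QBinomial

section FiniteTripleProduct

variable {K : Type*} [Field K] {Q x : K}

def finiteThetaTerm (Q x : K) (N : ℕ) (m : ℤ) : K :=
  qBinomial (Q ^ 2) (2 * N) (N + m) * (Q ^ (m ^ 2) * x ^ m)

theorem finiteThetaTerm_eq_zero {N : ℕ} {m : ℤ} (hm : m ∉ Set.Icc (-(N : ℤ)) N) :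
    finiteThetaTerm Q x N m = 0 := by
  rw [finiteThetaTerm, qBinomial_eq_zero, zero_mul]
  simp only [Set.mem_Icc, not_and_or, not_le] at hm
  omega

theorem hasFiniteSupport_finiteThetaTerm (Q x : K) (N : ℕ) :
    (finiteThetaTerm Q x N).HasFiniteSupport :=
  (Set.finite_Icc _ _).subset fun _ hm => not_imp_comm.1 finiteThetaTerm_eq_zero hm

theorem finiteThetaTerm_succ (hQ : Q ≠ 0) (hx : x ≠ 0) (N : ℕ) (m : ℤ) :
    finiteThetaTerm Q x (N + 1) m = (1 + Q ^ (4 * N + 2)) * finiteThetaTerm Q x N m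
      + Q ^ (2 * N + 1) * x * finiteThetaTerm Q x N (m - 1)
      + Q ^ (2 * N + 1) * x⁻¹ * finiteThetaTerm Q x N (m + 1) := by
  have hsq (a : ℤ) : (Q ^ 2) ^ a = Q ^ (2 * a) := by rw [← zpow_natCast, ← zpow_mul]; rfl
  have e₁ : (Q ^ 2) ^ (((2 * N : ℕ) : ℤ) + 1 - (N + m)) * (Q ^ (m ^ 2) * x ^ m)
      = Q ^ (2 * N + 1) * x * (Q ^ ((m - 1) ^ 2) * x ^ (m - 1)) := by
    rw [hsq, show 2 * (((2 * N : ℕ) : ℤ) + 1 - (N + m))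
      = ((2 * N + 1 : ℕ) : ℤ) + (1 - 2 * m) by push_cast; ring,
      show (m - 1) ^ 2 = m ^ 2 + (1 - 2 * m) by ring, zpow_add₀ hQ, zpow_add₀ hQ (m ^ 2),
      zpow_natCast, zpow_sub_one₀ hx]
    field_simp
  have e₂ : (Q ^ 2) ^ ((N : ℤ) + m + 1) * (Q ^ (m ^ 2) * x ^ m)
      = Q ^ (2 * N + 1) * x⁻¹ * (Q ^ ((m + 1) ^ 2) * x ^ (m + 1)) := by
    rw [hsq, show 2 * ((N : ℤ) + m + 1) = ((2 * N + 1 : ℕ) : ℤ) + (1 + 2 * m) by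
      push_cast; ring, show (m + 1) ^ 2 = m ^ 2 + (1 + 2 * m) by ring, zpow_add₀ hQ,
      zpow_add₀ hQ (m ^ 2), zpow_natCast, zpow_add_one₀ hx]
    field_simp
  simp only [finiteThetaTerm]
  rw [show 2 * (N + 1) = 2 * N + 2 by ring,
    show ((N + 1 : ℕ) : ℤ) + m = N + m + 1 by push_cast; ring,
    qBinomial_add_two_add_one (pow_ne_zero 2 hQ), show (N : ℤ) + (m - 1) = N + m - 1 by ring,
    show (N : ℤ) + (m + 1) = N + m + 1 by ring]
  linear_combination qBinomial (Q ^ 2) (2 * N) (N + m - 1) * e₁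
    + qBinomial (Q ^ 2) (2 * N) (N + m + 1) * e₂

theorem prod_range_eq_finsum_finiteThetaTerm (hQ : Q ≠ 0) (hx : x ≠ 0) (N : ℕ) :
    ∏ n ∈ range N, (1 + x * Q ^ (2 * n + 1)) * (1 + x⁻¹ * Q ^ (2 * n + 1))
      = ∑ᶠ m : ℤ, finiteThetaTerm Q x N m := by
  induction N with
  | zero =>
    rw [prod_range_zero, finsum_eq_single _ 0 fun m hm => finiteThetaTerm_eq_zero (by simpa)]
    simp [finiteThetaTerm, qBinomial_zero_right]
  | succ N ih =>
    have hfin := hasFiniteSupport_finiteThetaTerm Q x N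
    have hshift (s : ℤ) :
        ∑ᶠ m : ℤ, finiteThetaTerm Q x N (m + s) = ∑ᶠ m, finiteThetaTerm Q x N m :=
      finsum_comp_equiv (Equiv.addRight s)
    simp only [finiteThetaTerm_succ hQ hx, sub_eq_add_neg]
    rw [finsum_add_distrib, finsum_add_distrib, ← mul_finsum, ← mul_finsum, ← mul_finsum,
      prod_range_succ, ih, hshift, hshift]
    · field_simp
      ring
    all_goals fun_prop (disch := exact add_left_injective _)

end FiniteTripleProduct

section Analytic

variable {q : ℂ}

theorem multipliable_one_sub_mul_pow (a : ℂ) (hq : ‖q‖ < 1) :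
    Multipliable fun n : ℕ => 1 - a * q ^ n := by
  simpa [sub_eq_add_neg] using multipliable_one_add_of_summable (f := fun n => -(a * q ^ n))
    (by simpa [norm_mul, norm_pow] using
      (summable_geometric_of_lt_one (norm_nonneg q) hq).mul_left ‖a‖)

theorem tendsto_prod_range_qPochInf (a : ℂ) (hq : ‖q‖ < 1) :
    Tendsto (fun N => ∏ n ∈ range N, (1 - a * q ^ n)) atTop (𝓝 (qPochInf a q)) :=
  (multipliable_one_sub_mul_pow a hq).hasProd.tendsto_prod_nat

theorem tendsto_qFactorial (hq : ‖q‖ < 1) :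
    Tendsto (qFactorial q) atTop (𝓝 (qPochInf q q)) := by
  refine (tendsto_prod_range_qPochInf q hq).congr fun n => prod_congr rfl fun j _ => ?_
  rw [pow_succ']

theorem one_sub_pow_succ_ne_zero (hq : ‖q‖ < 1) (n : ℕ) : 1 - q ^ (n + 1) ≠ 0 := by
  refine sub_ne_zero.2 fun h => ?_
  have := pow_lt_one₀ (norm_nonneg q) hq n.succ_ne_zero
  rw [← norm_pow, ← h, norm_one] at this
  exact this.false

theorem qFactorial_ne_zero (hq : ‖q‖ < 1) (n : ℕ) : qFactorial q n ≠ 0 :=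
  prod_ne_zero_iff.2 fun j _ => one_sub_pow_succ_ne_zero hq j

theorem qPochInf_self_ne_zero (hq : ‖q‖ < 1) : qPochInf q q ≠ 0 := by
  refine tprod_one_add_ne_zero_of_summable (f := fun n => -(q * q ^ n)) (fun n => ?_) ?_
  · simpa [← sub_eq_add_neg, ← pow_succ'] using one_sub_pow_succ_ne_zero hq n
  · simpa [norm_mul, norm_pow] using
      (summable_geometric_of_lt_one (norm_nonneg q) hq).mul_left ‖q‖

theorem qFactorial_mul_qBinomial (hq : ‖q‖ < 1) {k n : ℕ} (h : k ≤ n) :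
    qFactorial q n * qBinomial q n k
      = qFactorial q n ^ 2 / (qFactorial q k * qFactorial q (n - k)) := by
  rw [eq_div_iff (mul_ne_zero (qFactorial_ne_zero hq k) (qFactorial_ne_zero hq (n - k))),
    ← qFactorial_mul_qFactorial_mul_qBinomial (q := q) h]
  ring

theorem exists_norm_qFactorial_mul_qBinomial_le (hq : ‖q‖ < 1) :
    ∃ C, ∀ (n : ℕ) (k : ℤ), ‖qFactorial q n * qBinomial q n k‖ ≤ C := by
  obtain ⟨U, hU⟩ := (tendsto_qFactorial hq).norm.bddAbove_range
  obtain ⟨V, hV⟩ :=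
    ((tendsto_qFactorial hq).inv₀ (qPochInf_self_ne_zero hq)).norm.bddAbove_range
  refine ⟨U ^ 2 * V ^ 2, fun n k => ?_⟩
  have hV₀ : 0 ≤ V := (norm_nonneg _).trans (hV (Set.mem_range_self 0))
  by_cases hk : 0 ≤ k ∧ k ≤ n
  · lift k to ℕ using hk.1
    rw [qFactorial_mul_qBinomial hq (by exact_mod_cast hk.2), div_eq_mul_inv, mul_inv, norm_mul,
      norm_mul, norm_pow, sq V]
    gcongr
    · exact hU (Set.mem_range_self n)
    · exact hV (Set.mem_range_self k)
    · exact hV (Set.mem_range_self (n - k))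
  · rw [qBinomial_eq_zero (by omega), mul_zero, norm_zero]
    positivity

theorem tendsto_qFactorial_mul_qBinomial (hq : ‖q‖ < 1) (m : ℤ) :
    Tendsto (fun N : ℕ => qFactorial q (2 * N) * qBinomial q (2 * N) (N + m)) atTop (𝓝 1) := by
  have hA := qPochInf_self_ne_zero hq
  have hshift (s : ℤ) :
      Tendsto (fun N : ℕ => qFactorial q (N + s).toNat) atTop (𝓝 (qPochInf q q)) :=
    (tendsto_qFactorial hq).comp
      (tendsto_atTop_atTop.2 fun b => ⟨b + s.natAbs, fun N hN => by omega⟩)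
  have hlim : Tendsto (fun N : ℕ => qFactorial q (2 * N) ^ 2
      / (qFactorial q (N + m).toNat * qFactorial q (N + -m).toNat)) atTop
      (𝓝 (qPochInf q q ^ 2 / (qPochInf q q * qPochInf q q))) :=
    (((tendsto_qFactorial hq).comp (tendsto_id.const_mul_atTop' two_pos)).pow 2).div
      ((hshift m).mul (hshift (-m))) (mul_ne_zero hA hA)
  rw [← sq, div_self (pow_ne_zero 2 hA)] at hlim
  refine hlim.congr' ?_
  filter_upwards [eventually_ge_atTop m.natAbs] with N hN
  have hk : ((N + m).toNat : ℤ) = N + m := by omega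
  rw [← hk, qFactorial_mul_qBinomial hq (by omega),
    show 2 * N - (N + m).toNat = (N + -m).toNat by omega, Int.toNat_natCast]

end Analytic

section TripleProduct

open Complex

theorem summable_zpow_sq_mul_zpow {Q x : ℂ} (hQ : ‖Q‖ < 1) (hQ0 : Q ≠ 0) (hx : x ≠ 0) :
    Summable fun m : ℤ => Q ^ (m ^ 2) * x ^ m := by
  have hπI : (π : ℂ) * I ≠ 0 := mul_ne_zero (ofReal_ne_zero.2 Real.pi_ne_zero) I_ne_zero
  set τ := log Q / (π * I)
  set z := log x / (2 * (π * I))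
  have hτ : cexp (π * I * τ) = Q := by rw [mul_div_cancel₀ _ hπI, exp_log hQ0]
  have hz : cexp (2 * (π * I) * z) = x := by
    rw [mul_div_cancel₀ _ (mul_ne_zero two_ne_zero hπI), exp_log hx]
  have him : 0 < τ.im := by
    rw [← hτ, norm_exp, Real.exp_lt_one_iff] at hQ
    simpa [mul_re, Real.pi_pos] using hQ
  refine ((summable_jacobiTheta₂_term_iff z τ).2 him).congr fun m => ?_
  rw [jacobiTheta₂_term, ← hτ, ← hz, ← exp_int_mul, ← exp_int_mul, ← exp_add]
  congr 1
  push_cast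
  ring

theorem tsum_zpow_sq_mul_zpow {Q x : ℂ} (hQ : ‖Q‖ < 1) (hQ0 : Q ≠ 0) (hx : x ≠ 0) :
    ∑' m : ℤ, Q ^ (m ^ 2) * x ^ m
      = qPochInf (Q ^ 2) (Q ^ 2) * qPochInf (-(Q * x)) (Q ^ 2)
        * qPochInf (-(Q * x⁻¹)) (Q ^ 2) := by
  have hq : ‖Q ^ 2‖ < 1 := by rw [norm_pow]; exact pow_lt_one₀ (norm_nonneg Q) hQ two_ne_zero
  set P : ℕ → ℂ := fun N => qFactorial (Q ^ 2) (2 * N)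
    * ∏ n ∈ range N, (1 + x * Q ^ (2 * n + 1)) * (1 + x⁻¹ * Q ^ (2 * n + 1))
  have hprod : Tendsto P atTop (𝓝 (qPochInf (Q ^ 2) (Q ^ 2) * qPochInf (-(Q * x)) (Q ^ 2)
      * qPochInf (-(Q * x⁻¹)) (Q ^ 2))) := by
    refine ((((tendsto_qFactorial hq).comp (tendsto_id.const_mul_atTop' two_pos)).mul
      (tendsto_prod_range_qPochInf _ hq)).mul (tendsto_prod_range_qPochInf _ hq)).congr
      fun N => ?_
    simp only [P, Function.comp_apply, id, mul_assoc, ← prod_mul_distrib]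
    congr 1
    refine prod_congr rfl fun n _ => ?_
    ring
  have hsum : Tendsto P atTop (𝓝 (∑' m : ℤ, Q ^ (m ^ 2) * x ^ m)) := by
    obtain ⟨C, hC⟩ := exists_norm_qFactorial_mul_qBinomial_le hq
    have hP (N : ℕ) :
        P N = ∑' m : ℤ, qFactorial (Q ^ 2) (2 * N) * finiteThetaTerm Q x N m := by
      simp only [P]
      rw [prod_range_eq_finsum_finiteThetaTerm hQ0 hx, tsum_mul_left,
        tsum_eq_finsum (hasFiniteSupport_finiteThetaTerm Q x N)]
    rw [funext hP]
    refine tendsto_tsum_of_dominated_convergence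
      ((summable_zpow_sq_mul_zpow hQ hQ0 hx).norm.mul_left C) (fun m => ?_)
      (Eventually.of_forall fun N m => ?_)
    · simpa [finiteThetaTerm, mul_assoc] using
        (tendsto_qFactorial_mul_qBinomial hq m).mul_const (Q ^ (m ^ 2) * x ^ m)
    · rw [finiteThetaTerm, ← mul_assoc, norm_mul]
      exact mul_le_mul_of_nonneg_right (hC _ _) (norm_nonneg _)
  exact tendsto_nhds_unique hsum hprod

end TripleProduct

/-- Jacobi triple product identity: for `τ` in the upper half plane and
`q = exp(2πiτ)`, the theta function `ϑ_τ(z) = ∑_{m∈ℤ} q^{m²/2} e^{2πimz}`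
equals `(q;q)_∞ (-q^{1/2} e^{2πiz};q)_∞ (-q^{1/2} e^{-2πiz};q)_∞`. -/
theorem jacobi_triple_product (τ : ℂ) (hτ : 0 < τ.im)
    (q : ℂ) (hq : q = Complex.exp (2 * (π : ℂ) * Complex.I * τ)) (z : ℂ) :
    (∑' m : ℤ, Complex.exp ((π : ℂ) * Complex.I * τ * (m : ℂ) ^ 2)
        * Complex.exp (2 * (π : ℂ) * Complex.I * (m : ℂ) * z)) =
      qPochInf q q *
      qPochInf (-(Complex.exp ((π : ℂ) * Complex.I * τ))
        * Complex.exp (2 * (π : ℂ) * Complex.I * z)) q *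
      qPochInf (-(Complex.exp ((π : ℂ) * Complex.I * τ))
        * Complex.exp (-(2 * (π : ℂ) * Complex.I * z))) q := by
  set Q := Complex.exp (π * Complex.I * τ)
  set x := Complex.exp (2 * π * Complex.I * z)
  have hQ : ‖Q‖ < 1 := by
    rw [Complex.norm_exp, Real.exp_lt_one_iff]
    simpa [Complex.mul_re, Real.pi_pos] using hτ
  have hq' : q = Q ^ 2 := by rw [hq, ← Complex.exp_nat_mul]; push_cast; ring_nf
  have hterm (m : ℤ) : Complex.exp (π * Complex.I * τ * m ^ 2)
      * Complex.exp (2 * π * Complex.I * m * z) = Q ^ (m ^ 2) * x ^ m := by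
    rw [← Complex.exp_int_mul, ← Complex.exp_int_mul]
    congr 2 <;> push_cast <;> ring
  rw [tsum_congr hterm, tsum_zpow_sq_mul_zpow hQ (Complex.exp_ne_zero _) (Complex.exp_ne_zero _),
    hq', Complex.exp_neg, neg_mul, neg_mul]
end
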